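/- In the q-shuffle algebra on two generators x,y, the generators satisfy the q-Serre relation: x⋆x⋆x⋆y - [3]_q x⋆x⋆y⋆x + [3]_q x⋆y⋆x⋆x - y⋆x⋆x⋆x = 0, where [3]_q = q^2 + 1 + q^{-2}. -/

import Mathlib

open scoped Classical

inductive Letter | x | y
deriving DecidableEq

instance : Fintype Letter := ⟨{Letter.x, Letter.y}, fun a => by cases a <;> simp⟩

/-- x ↦ 1, y ↦ -1 -/
def bar : Letter → ℤ
  | .x => 1
  | .y => -1

/-- σ swaps the letters x and y. -/
def sigma : Letter → Letter
  | .x => .y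
  | .y => .x

/-- the pairing ⟨u,v⟩ : 2 if u = v, -2 otherwise. -/
def pair : Letter → Letter → ℤ := fun u v => if u = v then 2 else -2

noncomputable section

/-- The free associative algebra on the two letters x, y (with its word basis). -/
abbrev V (F : Type*) [Field F] := MonoidAlgebra F (FreeMonoid Letter)

variable {F : Type*} [Field F]

/-- the basis word of V corresponding to a list of letters -/
def wd (w : List Letter) : V F := MonoidAlgebra.single (FreeMonoid.ofList w) 1

/-- the q-shuffle product of two words, by the left recursion -/
def shuffleWord (q : F) : List Letter → List Letter → V F
  | [], v => wd v
  | u1 :: ut, [] => wd (u1 :: ut)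
  | u1 :: ut, v1 :: vt =>
      wd [u1] * shuffleWord q ut (v1 :: vt)
      + q ^ (((u1 :: ut).map (fun a => pair a v1)).sum) •
          (wd [v1] * shuffleWord q (u1 :: ut) vt)
termination_by u v => u.length + v.length

/-- the q-shuffle product on V, extended bilinearly -/
def shuffle (q : F) (a b : V F) : V F :=
  a.coeff.sum fun u cu => b.coeff.sum fun v cv =>
    (cu * cv) • shuffleWord q (FreeMonoid.toList u) (FreeMonoid.toList v)

/-- the quantum integer [m]_q -/
def qint (q : F) (m : ℤ) : F := (q ^ m - q ^ (-m)) / (q - q⁻¹)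

/-- the quantum factorial [m]_q! -/
def qfac (q : F) (m : ℤ) : F := ∏ j ∈ Finset.range m.toNat, qint q ((j : ℤ) + 1)

/-- e_i = ā_1 + ⋯ + ā_i, the i-th elevation of the word w -/
def esum (w : List Letter) (i : ℕ) : ℤ := ((w.take i).map bar).sum

/-- A word is Catalan when all partial sums of bar are nonnegative and the total is zero. -/
def IsCatalan (w : List Letter) : Prop :=
  (∀ i, i ≤ w.length → 0 ≤ esum w i) ∧ esum w w.length = 0

/-- the coefficient C(w) = ∏_{i=0}^{2n} [1 + e_i]_q -/
def Ccoef (q : F) (w : List Letter) : F :=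
  ∏ i ∈ Finset.range (w.length + 1), qint q (1 + esum w i)

/-- the n-th Catalan element C_n = ∑_{w ∈ Cat_n} C(w) w  -/
def catalanElt (q : F) (n : ℕ) : V F :=
  ∑ f : Fin (2 * n) → Letter,
    if IsCatalan (List.ofFn f) then Ccoef q (List.ofFn f) • wd (List.ofFn f) else 0

/-- the antiautomorphism ζ : reverse the word and swap x,y, extended linearly -/
def zeta (a : V F) : V F :=
  a.coeff.sum fun w c =>
    MonoidAlgebra.single (FreeMonoid.ofList (((FreeMonoid.toList w).map sigma).reverse)) c

/-- The profile of a word: delete from the elevation sequence every interior e_i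
    such that e_{i+1}-e_i and e_i-e_{i-1} have the same sign. -/
def profile (w : List Letter) : List ℤ :=
  (List.range (w.length + 1)).filterMap fun i =>
    if i = 0 ∨ i = w.length then some (esum w i)
    else if 0 < (esum w (i + 1) - esum w i) * (esum w i - esum w (i - 1)) then none
    else some (esum w i)

/-- The list (ℓ_0, h_1, ℓ_1, h_2, …, h_r, ℓ_r). -/
def P (r : ℕ) (ℓ h : ℕ → ℤ) : List ℤ :=
  List.ofFn fun i : Fin (2 * r + 1) =>
    if i.val % 2 = 0 then ℓ (i.val / 2) else h ((i.val + 1) / 2)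

/-- the word x^{h_1} y^{h_1-ℓ_1} x^{h_2-ℓ_1} y^{h_2-ℓ_2} ⋯ x^{h_r-ℓ_{r-1}} y^{h_r} -/
def explicitWord (r : ℕ) (ℓ h : ℕ → ℤ) : List Letter :=
  (List.range r).flatMap fun i =>
    List.replicate (h (i + 1) - ℓ i).toNat Letter.x ++
      List.replicate (h (i + 1) - ℓ (i + 1)).toNat Letter.y

/-- C(ℓ_0,h_1,…,h_r,ℓ_r), the ratio of q-factorials attached to a profile. -/
def Cprof (q : F) (r : ℕ) (ℓ h : ℕ → ℤ) : F :=
  (∏ i ∈ Finset.Icc 1 r, qfac q (h i) * qfac q (h i + 1)) /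
    (∏ i ∈ Finset.range (r + 1), qfac q (ℓ i) * qfac q (ℓ i + 1))

end

/-! The q-shuffle product is bilinear, so by its defining recursion each of the four iterated
products expands into a combination of the words `xxxy`, `xxyx`, `xyxx`, `yxxx` with coefficients
Laurent polynomials in `q`. In the Serre combination these coefficients cancel word by word. -/

section QShuffle

variable {F : Type*} [Field F]

lemma wd_mul_wd (u v : List Letter) : (wd u : V F) * wd v = wd (u ++ v) := by
  simp [wd, MonoidAlgebra.single_mul_single]

lemma shuffle_add_left (q : F) (a b c : V F) :
    shuffle q (a + b) c = shuffle q a c + shuffle q b c := by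
  unfold shuffle
  rw [MonoidAlgebra.coeff_add, Finsupp.sum_add_index']
  · intro u; simp
  · intro u c1 c2; rw [← Finsupp.sum_add]; congr 1; ext v cv; rw [add_mul, add_smul]

lemma shuffle_smul_left (q s : F) (a b : V F) :
    shuffle q (s • a) b = s • shuffle q a b := by
  unfold shuffle
  rw [MonoidAlgebra.coeff_smul, Finsupp.sum_smul_index, Finsupp.smul_sum]
  · refine Finsupp.sum_congr fun u _ => ?_
    rw [Finsupp.smul_sum]
    refine Finsupp.sum_congr fun v _ => ?_
    rw [smul_smul, mul_assoc]
  · intro u; simp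

lemma shuffle_wd_wd (q : F) (u v : List Letter) :
    shuffle q (wd u : V F) (wd v) = shuffleWord q u v := by
  unfold shuffle wd
  rw [MonoidAlgebra.coeff_single, MonoidAlgebra.coeff_single, Finsupp.sum_single_index,
    Finsupp.sum_single_index]
  · simp [FreeMonoid.toList_ofList]
  · simp
  · simp

end QShuffle

section SerreTerms

variable {F : Type*} [Field F] {q : F}

open Letter

lemma shuffle_xxx_y :
    shuffle q (shuffle q (shuffle q (wd [x] : V F) (wd [x])) (wd [x])) (wd [y]) =
      ((1 + q ^ 2) * (1 + q ^ 2 + q ^ 4)) • (wd [x, x, x, y] + q ^ (-2 : ℤ) • wd [x, x, y, x]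
        + q ^ (-4 : ℤ) • wd [x, y, x, x] + q ^ (-6 : ℤ) • wd [y, x, x, x]) := by
  simp only [shuffle_wd_wd, shuffleWord, wd_mul_wd, shuffle_add_left, shuffle_smul_left,
    List.cons_append, List.nil_append, List.map_cons, List.map_nil, List.sum_cons, List.sum_nil,
    pair, ↓reduceIte, reduceCtorEq, Int.reduceAdd, Int.reduceNeg, zpow_neg, zpow_ofNat,
    mul_add, mul_smul_comm, smul_add, smul_smul]
  match_scalars <;> ring

lemma shuffle_xxy_x (hq : q ≠ 0) :
    shuffle q (shuffle q (shuffle q (wd [x] : V F) (wd [x])) (wd [y])) (wd [x]) =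
      (1 + q ^ 2) • ((q ^ 2 + 1 + q ^ (-2 : ℤ)) • wd [x, x, x, y]
        + (2 + q ^ (-2 : ℤ)) • wd [x, x, y, x] + (1 + 2 * q ^ (-2 : ℤ)) • wd [x, y, x, x]
        + (1 + q ^ (-2 : ℤ) + q ^ (-4 : ℤ)) • wd [y, x, x, x]) := by
  simp only [shuffle_wd_wd, shuffleWord, wd_mul_wd, shuffle_add_left, shuffle_smul_left,
    List.cons_append, List.nil_append, List.map_cons, List.map_nil, List.sum_cons, List.sum_nil,
    pair, ↓reduceIte, reduceCtorEq, Int.reduceAdd, Int.reduceNeg, zpow_neg, zpow_ofNat,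
    mul_add, mul_smul_comm, smul_add, smul_smul]
  match_scalars <;> field_simp <;> ring

lemma shuffle_xyx_x (hq : q ≠ 0) :
    shuffle q (shuffle q (shuffle q (wd [x] : V F) (wd [y])) (wd [x])) (wd [x]) =
      (1 + q ^ (-2 : ℤ)) • ((q ^ 2 + 1 + q ^ (-2 : ℤ)) • wd [x, x, x, y]
        + (2 + q ^ 2) • wd [x, x, y, x] + (1 + 2 * q ^ 2) • wd [x, y, x, x]
        + (1 + q ^ 2 + q ^ 4) • wd [y, x, x, x]) := by
  simp only [shuffle_wd_wd, shuffleWord, wd_mul_wd, shuffle_add_left, shuffle_smul_left,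
    List.cons_append, List.nil_append, List.map_cons, List.map_nil, List.sum_cons, List.sum_nil,
    pair, ↓reduceIte, reduceCtorEq, Int.reduceAdd, Int.reduceNeg, zpow_neg, zpow_ofNat,
    mul_add, mul_smul_comm, smul_add, smul_smul]
  match_scalars <;> field_simp <;> ring

lemma shuffle_yxx_x (hq : q ≠ 0) :
    shuffle q (shuffle q (shuffle q (wd [y] : V F) (wd [x])) (wd [x])) (wd [x]) =
      ((1 + q ^ 2) * (1 + q ^ 2 + q ^ 4)) • (q ^ (-6 : ℤ) • wd [x, x, x, y]
        + q ^ (-4 : ℤ) • wd [x, x, y, x] + q ^ (-2 : ℤ) • wd [x, y, x, x] + wd [y, x, x, x]) := by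
  simp only [shuffle_wd_wd, shuffleWord, wd_mul_wd, shuffle_add_left, shuffle_smul_left,
    List.cons_append, List.nil_append, List.map_cons, List.map_nil, List.sum_cons, List.sum_nil,
    pair, ↓reduceIte, reduceCtorEq, Int.reduceAdd, Int.reduceNeg, zpow_neg, zpow_ofNat,
    mul_add, mul_smul_comm, smul_add, smul_smul]
  match_scalars <;> field_simp <;> ring

end SerreTerms

theorem stmt5_general {F : Type*} [Field F] (q : F) (hq0 : q ≠ 0) :
    (shuffle q (shuffle q (shuffle q (wd [Letter.x] : V F) (wd [Letter.x] : V F)) (wd [Letter.x] : V F)) (wd [Letter.y] : V F))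
      - (q ^ 2 + 1 + q ^ (-2 : ℤ)) • (shuffle q (shuffle q (shuffle q (wd [Letter.x] : V F) (wd [Letter.x] : V F)) (wd [Letter.y] : V F)) (wd [Letter.x] : V F))
      + (q ^ 2 + 1 + q ^ (-2 : ℤ)) • (shuffle q (shuffle q (shuffle q (wd [Letter.x] : V F) (wd [Letter.y] : V F)) (wd [Letter.x] : V F)) (wd [Letter.x] : V F))
      - (shuffle q (shuffle q (shuffle q (wd [Letter.y] : V F) (wd [Letter.x] : V F)) (wd [Letter.x] : V F)) (wd [Letter.x] : V F)) = 0 := by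
  rw [shuffle_xxx_y, shuffle_xxy_x hq0, shuffle_xyx_x hq0, shuffle_yxx_x hq0]
  match_scalars <;> field_simp <;> ring

theorem stmt5 {F : Type*} [Field F] (q : F) (hq0 : q ≠ 0)
    (hq : ∀ k : ℕ, 0 < k → q ^ k ≠ 1) :
    (shuffle q (shuffle q (shuffle q (wd [Letter.x] : V F) (wd [Letter.x] : V F)) (wd [Letter.x] : V F)) (wd [Letter.y] : V F))
      - (q ^ 2 + 1 + q ^ (-2 : ℤ)) • (shuffle q (shuffle q (shuffle q (wd [Letter.x] : V F) (wd [Letter.x] : V F)) (wd [Letter.y] : V F)) (wd [Letter.x] : V F))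
      + (q ^ 2 + 1 + q ^ (-2 : ℤ)) • (shuffle q (shuffle q (shuffle q (wd [Letter.x] : V F) (wd [Letter.y] : V F)) (wd [Letter.x] : V F)) (wd [Letter.x] : V F))
      - (shuffle q (shuffle q (shuffle q (wd [Letter.y] : V F) (wd [Letter.x] : V F)) (wd [Letter.x] : V F)) (wd [Letter.x] : V F)) = 0 :=
  stmt5_general q hq0
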